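/- Let Γ be a coalgebra over a commutative ring A, L a right Γ-comodule, M a left Γ-comodule, and N a left Γ-comodule with trivial coaction (ψ_N(n) = 1 ⊗ n) that is flat as an A-module. Then for every n ≥ 0 there is an isomorphism of A-modules Cotor^n_Γ(L, M ⊗_A N) ≅ Cotor^n_Γ(L, M) ⊗_A N. In particular for n = 0: L □_Γ (M ⊗_A N) ≅ (L □_Γ M) ⊗_A N. -/

import Mathlib

open TensorProduct LinearMap

noncomputable section Preamble

variable (A : Type) [CommRing A] (Γ : Type) [AddCommGroup Γ] [Module A Γ]

/-- Coassociativity and counitality for a left Γ-comodule coaction. -/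
def IsLeftCoaction [Coalgebra A Γ] {M : Type} [AddCommGroup M] [Module A M]
    (ψ : M →ₗ[A] Γ ⊗[A] M) : Prop :=
  ((TensorProduct.assoc A Γ Γ M).toLinearMap ∘ₗ
      (LinearMap.rTensor M (Coalgebra.comul (R := A) (A := Γ))) ∘ₗ ψ) =
    (LinearMap.lTensor Γ ψ) ∘ₗ ψ ∧
  ((TensorProduct.lid A M).toLinearMap ∘ₗ
      (LinearMap.rTensor M (Coalgebra.counit (R := A) (A := Γ))) ∘ₗ ψ) = LinearMap.id

/-- Coassociativity and counitality for a right Γ-comodule coaction. -/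
def IsRightCoaction [Coalgebra A Γ] {L : Type} [AddCommGroup L] [Module A L]
    (ψ : L →ₗ[A] L ⊗[A] Γ) : Prop :=
  ((TensorProduct.assoc A L Γ Γ).toLinearMap ∘ₗ
      (LinearMap.rTensor Γ ψ) ∘ₗ ψ) =
    (LinearMap.lTensor L (Coalgebra.comul (R := A) (A := Γ))) ∘ₗ ψ ∧
  ((TensorProduct.rid A L).toLinearMap ∘ₗ
      (LinearMap.lTensor L (Coalgebra.counit (R := A) (A := Γ))) ∘ₗ ψ) = LinearMap.id

/-- The cotensor product `L □_Γ M` as a submodule of `L ⊗[A] M`. -/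
def cotensor {L M : Type} [AddCommGroup L] [Module A L] [AddCommGroup M] [Module A M]
    (ψL : L →ₗ[A] L ⊗[A] Γ) (ψM : M →ₗ[A] Γ ⊗[A] M) : Submodule A (L ⊗[A] M) :=
  LinearMap.ker
    (((TensorProduct.assoc A L Γ M).toLinearMap ∘ₗ LinearMap.rTensor M ψL) -
      LinearMap.lTensor L ψM)

/-- The extended-comodule coaction on `Γ ⊗[A] V`. -/
def extCoact [Coalgebra A Γ] (V : Type) [AddCommGroup V] [Module A V] :
    (Γ ⊗[A] V) →ₗ[A] Γ ⊗[A] (Γ ⊗[A] V) :=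
  (TensorProduct.assoc A Γ Γ V).toLinearMap ∘ₗ
    LinearMap.rTensor V (Coalgebra.comul (R := A) (A := Γ))

/-- `f` is a morphism of left Γ-comodules. -/
def IsComodMap {M N : Type} [AddCommGroup M] [Module A M] [AddCommGroup N] [Module A N]
    (ψM : M →ₗ[A] Γ ⊗[A] M) (ψN : N →ₗ[A] Γ ⊗[A] N) (f : M →ₗ[A] N) : Prop :=
  ψN ∘ₗ f = LinearMap.lTensor Γ f ∘ₗ ψM

end Preamble

noncomputable section BialgPreamble

variable (A : Type) [CommRing A] (Γ : Type) [Ring Γ] [Algebra A Γ]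

/-- The comodule primitives `A □_Γ M` of a left comodule. -/
def primitives {M : Type} [AddCommGroup M] [Module A M]
    (ψ : M →ₗ[A] Γ ⊗[A] M) : Submodule A M :=
  LinearMap.ker (ψ - TensorProduct.mk A Γ M 1)

/-- The coaction on the tensor product of two left comodules over a bialgebra. -/
def tensorCoact {M N : Type} [AddCommGroup M] [Module A M] [AddCommGroup N] [Module A N]
    (ψM : M →ₗ[A] Γ ⊗[A] M) (ψN : N →ₗ[A] Γ ⊗[A] N) :
    (M ⊗[A] N) →ₗ[A] Γ ⊗[A] (M ⊗[A] N) :=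
  (LinearMap.rTensor (M ⊗[A] N) (LinearMap.mul' A Γ)) ∘ₗ
    (TensorProduct.tensorTensorTensorComm A Γ M Γ N).toLinearMap ∘ₗ
    (TensorProduct.map ψM ψN)

/-- The primitive filtration of a left comodule; `primFil ψ (i+1)` is the paper's `M_i`,
and `primFil ψ 0 = M_{-1} = 0`. -/
def primFil {M : Type} [AddCommGroup M] [Module A M]
    (ψ : M →ₗ[A] Γ ⊗[A] M) : ℕ → Submodule A M
  | 0 => ⊥
  | (n + 1) =>
    Submodule.comap (ψ - TensorProduct.mk A Γ M 1)
      (LinearMap.range (LinearMap.lTensor Γ (primFil ψ n).subtype))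

end BialgPreamble
noncomputable section CotorPreamble

open TensorProduct LinearMap

variable (A : Type) [CommRing A] (Γ : Type) [AddCommGroup Γ] [Module A Γ] [Coalgebra A Γ]
variable (L : Type) [AddCommGroup L] [Module A L]
variable (M : Type) [AddCommGroup M] [Module A M]

/-- The comodule part `Γ^{⊗ n} ⊗ M` of the unreduced cobar resolution. -/
def CobarD : ℕ → ModuleCat A
  | 0 => ModuleCat.of A M
  | (n + 1) => ModuleCat.of A (Γ ⊗[A] (CobarD n))

variable {M}

/-- The alternating sum of the inner cofaces of the unreduced cobar complex. -/
def cobarDiffM (ψM : M →ₗ[A] Γ ⊗[A] M) :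
    ∀ n, (CobarD A Γ M n : Type) →ₗ[A] (CobarD A Γ M (n + 1) : Type)
  | 0 => ψM
  | (n + 1) =>
      (show ((CobarD A Γ M (n + 1) : Type) →ₗ[A] (CobarD A Γ M (n + 2) : Type)) from
        ((TensorProduct.assoc A Γ Γ (CobarD A Γ M n)).toLinearMap ∘ₗ
        LinearMap.rTensor (CobarD A Γ M n) (Coalgebra.comul (R := A) (A := Γ)))) -
        (show ((CobarD A Γ M (n + 1) : Type) →ₗ[A] (CobarD A Γ M (n + 2) : Type)) from
          LinearMap.lTensor Γ (cobarDiffM ψM n))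

/-- The full differential of the unreduced cobar complex computing `Cotor_Γ(L, M)`. -/
def cobarDiff (ψL : L →ₗ[A] L ⊗[A] Γ) (ψM : M →ₗ[A] Γ ⊗[A] M) (n : ℕ) :
    (L ⊗[A] (CobarD A Γ M n) : Type) →ₗ[A] (L ⊗[A] (CobarD A Γ M (n + 1)) : Type) :=
  (show ((L ⊗[A] (CobarD A Γ M n) : Type) →ₗ[A] (L ⊗[A] (CobarD A Γ M (n + 1)) : Type)) from
    ((TensorProduct.assoc A L Γ (CobarD A Γ M n)).toLinearMap ∘ₗ
      LinearMap.rTensor (CobarD A Γ M n) ψL)) -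
    (show ((L ⊗[A] (CobarD A Γ M n) : Type) →ₗ[A] (L ⊗[A] (CobarD A Γ M (n + 1)) : Type)) from
      LinearMap.lTensor L (cobarDiffM A Γ ψM n))

/-- Cocycles of the cobar complex. -/
def cobarCocycles (ψL : L →ₗ[A] L ⊗[A] Γ) (ψM : M →ₗ[A] Γ ⊗[A] M) (n : ℕ) :
    Submodule A (L ⊗[A] (CobarD A Γ M n)) :=
  LinearMap.ker (cobarDiff A Γ L ψL ψM n)

/-- Coboundaries of the cobar complex. -/
def cobarBdries (ψL : L →ₗ[A] L ⊗[A] Γ) (ψM : M →ₗ[A] Γ ⊗[A] M) :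
    ∀ n, Submodule A (L ⊗[A] (CobarD A Γ M n))
  | 0 => ⊥
  | (n + 1) => LinearMap.range (cobarDiff A Γ L ψL ψM n)

/-- `Cotor^n_Γ(L, M)`, the relative derived cotensor product, computed by the unreduced
cobar complex. -/
def Cotor (ψL : L →ₗ[A] L ⊗[A] Γ) (ψM : M →ₗ[A] Γ ⊗[A] M) (n : ℕ) : Type :=
  ↥(cobarCocycles A Γ L ψL ψM n) ⧸
    Submodule.comap (cobarCocycles A Γ L ψL ψM n).subtype (cobarBdries A Γ L ψL ψM n)

instance (ψL : L →ₗ[A] L ⊗[A] Γ) (ψM : M →ₗ[A] Γ ⊗[A] M) (n : ℕ) :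
    AddCommGroup (Cotor A Γ L ψL ψM n) :=
  inferInstanceAs (AddCommGroup (↥(cobarCocycles A Γ L ψL ψM n) ⧸
    Submodule.comap (cobarCocycles A Γ L ψL ψM n).subtype (cobarBdries A Γ L ψL ψM n)))

instance (ψL : L →ₗ[A] L ⊗[A] Γ) (ψM : M →ₗ[A] Γ ⊗[A] M) (n : ℕ) :
    Module A (Cotor A Γ L ψL ψM n) :=
  inferInstanceAs (Module A (↥(cobarCocycles A Γ L ψL ψM n) ⧸
    Submodule.comap (cobarCocycles A Γ L ψL ψM n).subtype (cobarBdries A Γ L ψL ψM n)))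

end CotorPreamble

attribute [reducible] CobarD


noncomputable section MyAux
open TensorProduct LinearMap

lemma flatHomologyAux (A : Type) [CommRing A]
    (X Y Z N : Type) [AddCommGroup X] [Module A X] [AddCommGroup Y] [Module A Y]
    [AddCommGroup Z] [Module A Z] [AddCommGroup N] [Module A N] [Module.Flat A N]
    (f : X →ₗ[A] Y) (g : Y →ₗ[A] Z) (hfg : LinearMap.range f ≤ LinearMap.ker g) :
    Nonempty ((↥(LinearMap.ker (g.rTensor N)) ⧸
        Submodule.comap (LinearMap.ker (g.rTensor N)).subtype
          (LinearMap.range (f.rTensor N))) ≃ₗ[A]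
      (↥(LinearMap.ker g) ⧸ Submodule.comap (LinearMap.ker g).subtype
          (LinearMap.range f)) ⊗[A] N) := by
  classical
  set K := LinearMap.ker g with hK
  set ι := K.subtype with hι
  have hinj : Function.Injective (ι.rTensor N) :=
    Module.Flat.rTensor_preserves_injective_linearMap ι K.injective_subtype
  have hex : Function.Exact ι g := by
    intro y
    constructor
    · intro h; exact ⟨⟨y, h⟩, rfl⟩
    · rintro ⟨k, rfl⟩; exact k.2
  have hexT : Function.Exact (ι.rTensor N) (g.rTensor N) :=
    Module.Flat.rTensor_exact N hex
  have hrange : LinearMap.range (ι.rTensor N) = LinearMap.ker (g.rTensor N) :=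
    hexT.linearMap_ker_eq.symm
  -- e1 : K ⊗ N ≃ ker (g.rTensor N)
  let e1 : (K ⊗[A] N) ≃ₗ[A] ↥(LinearMap.ker (g.rTensor N)) :=
    (LinearEquiv.ofInjective (ι.rTensor N) hinj).trans (LinearEquiv.ofEq _ _ hrange)
  have he1 : ∀ t : K ⊗[A] N, ((e1 t : Y ⊗[A] N)) = ι.rTensor N t := fun t => rfl
  -- f' : X → K
  let f' : X →ₗ[A] K := f.codRestrict K (fun x => hfg ⟨x, rfl⟩)
  have hf' : ι ∘ₗ f' = f := rfl
  -- step A : H ⊗ N ≃ (K ⊗ N) / range (f'.rTensor N)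
  have hcomap : Submodule.comap K.subtype (LinearMap.range f) = LinearMap.range f' :=
    (LinearMap.range_codRestrict _ _ _).symm
  let π : K →ₗ[A] (↥K ⧸ LinearMap.range f') := Submodule.mkQ _
  have hexπ : Function.Exact f' π := LinearMap.exact_map_mkQ_range f'
  have hexπT : Function.Exact (f'.rTensor N) (π.rTensor N) :=
    rTensor_exact N hexπ (Submodule.mkQ_surjective _)
  have hsurjT : Function.Surjective (π.rTensor N) :=
    LinearMap.rTensor_surjective N (Submodule.mkQ_surjective _)
  let e2 : ((K ⊗[A] N) ⧸ LinearMap.ker (π.rTensor N)) ≃ₗ[A]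
      ((↥K ⧸ LinearMap.range f') ⊗[A] N) :=
    (π.rTensor N).quotKerEquivOfSurjective hsurjT
  have hkerT : LinearMap.ker (π.rTensor N) = LinearMap.range (f'.rTensor N) :=
    hexπT.linearMap_ker_eq
  -- transport range (f'.rTensor N) along e1
  have hmap : Submodule.map (e1 : K ⊗[A] N →ₗ[A] _) (LinearMap.range (f'.rTensor N)) =
      Submodule.comap (LinearMap.ker (g.rTensor N)).subtype (LinearMap.range (f.rTensor N)) := by
    have hcomp : f.rTensor N = (ι.rTensor N) ∘ₗ (f'.rTensor N) := by
      rw [← LinearMap.rTensor_comp]; rfl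
    ext s
    simp only [Submodule.mem_map, Submodule.mem_comap, LinearMap.mem_range]
    constructor
    · rintro ⟨t, ⟨x, rfl⟩, rfl⟩
      exact ⟨x, by rw [hcomp]; exact (he1 _).symm⟩
    · rintro ⟨x, hx⟩
      refine ⟨f'.rTensor N x, ⟨x, rfl⟩, ?_⟩
      apply Subtype.coe_injective
      show ((e1 ((rTensor N f') x) : Y ⊗[A] N)) = (s : Y ⊗[A] N)
      rw [he1, ← LinearMap.comp_apply, ← hcomp, hx]; rfl
  exact ⟨(Submodule.Quotient.equiv _ _ e1 hmap).symm.trans <|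
    (Submodule.quotEquivOfEq _ _ hkerT.symm).trans <| e2.trans <|
    TensorProduct.congr (Submodule.quotEquivOfEq _ _ hcomap.symm) (LinearEquiv.refl A N)⟩

variable {A : Type} [CommRing A]
variable {C W X Y X' N Q : Type}
  [AddCommGroup C] [Module A C] [AddCommGroup W] [Module A W]
  [AddCommGroup X] [Module A X] [AddCommGroup Y] [Module A Y]
  [AddCommGroup X'] [Module A X'] [AddCommGroup N] [Module A N]
  [AddCommGroup Q] [Module A Q]

lemma extR {f g : C ⊗[A] (X ⊗[A] N) →ₗ[A] Q}
    (h : ∀ c x n, f (c ⊗ₜ[A] (x ⊗ₜ[A] n)) = g (c ⊗ₜ[A] (x ⊗ₜ[A] n))) : f = g := by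
  apply TensorProduct.ext'
  intro c t
  induction t using TensorProduct.induction_on with
  | zero => simp
  | tmul x n => exact h c x n
  | add t s ht hs => rw [tmul_add, map_add, map_add, ht, hs]

/-- L1: naturality of `assoc.symm`. -/
lemma jugL1 (f : X →ₗ[A] Y) :
    (TensorProduct.assoc A C Y N).symm.toLinearMap ∘ₗ lTensor C (rTensor N f)
      = rTensor N (lTensor C f) ∘ₗ (TensorProduct.assoc A C X N).symm.toLinearMap := by
  apply extR; intro c x n; simp

/-- L2: naturality of coface-type maps. -/
lemma jugL2 (φ : C →ₗ[A] C ⊗[A] W) (f : X →ₗ[A] Y) :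
    ((TensorProduct.assoc A C W Y).toLinearMap ∘ₗ rTensor Y φ) ∘ₗ lTensor C f
      = lTensor C (lTensor W f) ∘ₗ
        ((TensorProduct.assoc A C W X).toLinearMap ∘ₗ rTensor X φ) := by
  apply TensorProduct.ext'
  intro c x
  simp only [coe_comp, Function.comp_apply, lTensor_tmul, rTensor_tmul,
    LinearEquiv.coe_coe]
  generalize φ c = u
  induction u using TensorProduct.induction_on with
  | zero => simp
  | tmul c' w => simp
  | add u v hu hv => simp [add_tmul, hu, hv]

/-- L3 claim 1. -/
lemma jugL3a (φ : C →ₗ[A] C ⊗[A] W) :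
    (TensorProduct.assoc A C W (W ⊗[A] X)).toLinearMap ∘ₗ rTensor (W ⊗[A] X) φ ∘ₗ
        (TensorProduct.assoc A C W X).toLinearMap
      = (lTensor C (TensorProduct.assoc A W W X).toLinearMap ∘ₗ
          (TensorProduct.assoc A C (W ⊗[A] W) X).toLinearMap) ∘ₗ
        rTensor X ((TensorProduct.assoc A C W W).toLinearMap ∘ₗ rTensor W φ) := by
  apply TensorProduct.ext_threefold
  intro c w x
  simp only [coe_comp, Function.comp_apply, LinearEquiv.coe_coe, assoc_tmul,
    rTensor_tmul, lTensor_tmul]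
  generalize φ c = u
  induction u using TensorProduct.induction_on with
  | zero => simp
  | tmul c' w' => simp
  | add u v hu hv => simp [add_tmul, hu, hv]

/-- L3 claim 2. -/
lemma jugL3b (ψ : W →ₗ[A] W ⊗[A] W) :
    lTensor C ((TensorProduct.assoc A W W X).toLinearMap ∘ₗ rTensor X ψ) ∘ₗ
        (TensorProduct.assoc A C W X).toLinearMap
      = (lTensor C (TensorProduct.assoc A W W X).toLinearMap ∘ₗ
          (TensorProduct.assoc A C (W ⊗[A] W) X).toLinearMap) ∘ₗ
        rTensor X (lTensor C ψ) := by
  apply TensorProduct.ext_threefold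
  intro c w x
  simp only [coe_comp, Function.comp_apply, LinearEquiv.coe_coe, assoc_tmul,
    rTensor_tmul, lTensor_tmul]

/-- L3: transported coassociativity. -/
lemma jugL3 (φ : C →ₗ[A] C ⊗[A] W) (ψ : W →ₗ[A] W ⊗[A] W)
    (h : (TensorProduct.assoc A C W W).toLinearMap ∘ₗ rTensor W φ ∘ₗ φ
        = lTensor C ψ ∘ₗ φ) :
    (TensorProduct.assoc A C W (W ⊗[A] X)).toLinearMap ∘ₗ rTensor (W ⊗[A] X) φ ∘ₗ
        ((TensorProduct.assoc A C W X).toLinearMap ∘ₗ rTensor X φ)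
      = lTensor C ((TensorProduct.assoc A W W X).toLinearMap ∘ₗ rTensor X ψ) ∘ₗ
        ((TensorProduct.assoc A C W X).toLinearMap ∘ₗ rTensor X φ) := by
  have h1 := jugL3a (X := X) φ
  have h2 := jugL3b (C := C) (X := X) ψ
  have e1 : (TensorProduct.assoc A C W (W ⊗[A] X)).toLinearMap ∘ₗ rTensor (W ⊗[A] X) φ ∘ₗ
        ((TensorProduct.assoc A C W X).toLinearMap ∘ₗ rTensor X φ)
      = ((TensorProduct.assoc A C W (W ⊗[A] X)).toLinearMap ∘ₗ rTensor (W ⊗[A] X) φ ∘ₗ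
          (TensorProduct.assoc A C W X).toLinearMap) ∘ₗ rTensor X φ := by
    simp only [LinearMap.comp_assoc]
  have e2 : lTensor C ((TensorProduct.assoc A W W X).toLinearMap ∘ₗ rTensor X ψ) ∘ₗ
        ((TensorProduct.assoc A C W X).toLinearMap ∘ₗ rTensor X φ)
      = (lTensor C ((TensorProduct.assoc A W W X).toLinearMap ∘ₗ rTensor X ψ) ∘ₗ
          (TensorProduct.assoc A C W X).toLinearMap) ∘ₗ rTensor X φ := by
    simp only [LinearMap.comp_assoc]
  rw [e1, e2, h1, h2]
  simp only [LinearMap.comp_assoc, ← LinearMap.rTensor_comp]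
  rw [h]

/-- jugL4 step 1. -/
lemma jugL4a (g : X' →ₗ[A] X ⊗[A] N) :
    lTensor C (lTensor W g) ∘ₗ (TensorProduct.assoc A C W X').toLinearMap
      = (TensorProduct.assoc A C W (X ⊗[A] N)).toLinearMap ∘ₗ lTensor (C ⊗[A] W) g := by
  apply TensorProduct.ext_threefold
  intro c w x'
  simp

/-- jugL4 step 3: naturality of assoc.symm wrt first slot. -/
lemma jugL4c (φ : C →ₗ[A] C ⊗[A] W) :
    rTensor N (rTensor X φ) ∘ₗ (TensorProduct.assoc A C X N).symm.toLinearMap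
      = (TensorProduct.assoc A (C ⊗[A] W) X N).symm.toLinearMap ∘ₗ
          rTensor (X ⊗[A] N) φ := by
  have h := TensorProduct.map_map_comp_assoc_symm_eq (R := A) φ
    (LinearMap.id : X →ₗ[A] X) (LinearMap.id : N →ₗ[A] N)
  rw [TensorProduct.map_id] at h
  exact h

/-- jugL4 step 4: pure pentagon juggle. -/
lemma jugL4d :
    (TensorProduct.assoc A C (W ⊗[A] X) N).symm.toLinearMap ∘ₗ
        lTensor C (TensorProduct.assoc A W X N).symm.toLinearMap ∘ₗ
        (TensorProduct.assoc A C W (X ⊗[A] N)).toLinearMap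
      = rTensor N (TensorProduct.assoc A C W X).toLinearMap ∘ₗ
        (TensorProduct.assoc A (C ⊗[A] W) X N).symm.toLinearMap := by
  apply TensorProduct.ext_fourfold'
  intro c w x n
  simp

/-- L4: compatibility of the coaction-coface with the N-shuffling isos. -/
lemma jugL4 (φ : C →ₗ[A] C ⊗[A] W) (g : X' →ₗ[A] X ⊗[A] N) :
    (TensorProduct.assoc A C (W ⊗[A] X) N).symm.toLinearMap ∘ₗ
        lTensor C ((TensorProduct.assoc A W X N).symm.toLinearMap ∘ₗ lTensor W g) ∘ₗ
        (TensorProduct.assoc A C W X').toLinearMap ∘ₗ rTensor X' φ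
      = rTensor N ((TensorProduct.assoc A C W X).toLinearMap ∘ₗ rTensor X φ) ∘ₗ
        (TensorProduct.assoc A C X N).symm.toLinearMap ∘ₗ lTensor C g := by
  have step2 : lTensor (C ⊗[A] W) g ∘ₗ rTensor X' φ
      = rTensor (X ⊗[A] N) φ ∘ₗ lTensor C g := by
    rw [lTensor_comp_rTensor, rTensor_comp_lTensor]
  calc (TensorProduct.assoc A C (W ⊗[A] X) N).symm.toLinearMap ∘ₗ
        lTensor C ((TensorProduct.assoc A W X N).symm.toLinearMap ∘ₗ lTensor W g) ∘ₗ
        (TensorProduct.assoc A C W X').toLinearMap ∘ₗ rTensor X' φ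
      = (TensorProduct.assoc A C (W ⊗[A] X) N).symm.toLinearMap ∘ₗ
          lTensor C (TensorProduct.assoc A W X N).symm.toLinearMap ∘ₗ
          (lTensor C (lTensor W g) ∘ₗ (TensorProduct.assoc A C W X').toLinearMap) ∘ₗ
          rTensor X' φ := by
        rw [lTensor_comp]; simp only [LinearMap.comp_assoc]
    _ = ((TensorProduct.assoc A C (W ⊗[A] X) N).symm.toLinearMap ∘ₗ
          lTensor C (TensorProduct.assoc A W X N).symm.toLinearMap ∘ₗ
          (TensorProduct.assoc A C W (X ⊗[A] N)).toLinearMap) ∘ₗ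
          (lTensor (C ⊗[A] W) g ∘ₗ rTensor X' φ) := by
        rw [jugL4a]; simp only [LinearMap.comp_assoc]
    _ = (rTensor N (TensorProduct.assoc A C W X).toLinearMap ∘ₗ
          (TensorProduct.assoc A (C ⊗[A] W) X N).symm.toLinearMap) ∘ₗ
          rTensor (X ⊗[A] N) φ ∘ₗ lTensor C g := by
        rw [jugL4d, step2]
    _ = rTensor N ((TensorProduct.assoc A C W X).toLinearMap ∘ₗ rTensor X φ) ∘ₗ
        (TensorProduct.assoc A C X N).symm.toLinearMap ∘ₗ lTensor C g := by
        rw [rTensor_comp]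
        simp only [LinearMap.comp_assoc]
        rw [← LinearMap.comp_assoc (lTensor C g), ← LinearMap.comp_assoc (lTensor C g),
          ← jugL4c]
        simp only [LinearMap.comp_assoc]

/-- Transport of relative homology along a compatible equivalence. -/
lemma transportHomology {A : Type} [CommRing A]
    {Y Y2 Y' Y2' N P : Type}
    [AddCommGroup Y] [Module A Y] [AddCommGroup Y2] [Module A Y2]
    [AddCommGroup Y'] [Module A Y'] [AddCommGroup Y2'] [Module A Y2']
    [AddCommGroup N] [Module A N] [Module.Flat A N]
    [AddCommGroup P] [Module A P]
    (g : Y →ₗ[A] Y2) (g' : Y' →ₗ[A] Y2')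
    (E : Y' ≃ₗ[A] Y ⊗[A] N) (E2 : Y2' ≃ₗ[A] Y2 ⊗[A] N)
    (hcomm : E2.toLinearMap ∘ₗ g' = rTensor N g ∘ₗ E.toLinearMap)
    (p : P →ₗ[A] Y) (B' : Submodule A Y')
    (hB' : Submodule.map (E : Y' →ₗ[A] Y ⊗[A] N) B' = LinearMap.range (p.rTensor N))
    (hpg : LinearMap.range p ≤ LinearMap.ker g) :
    Nonempty ((↥(LinearMap.ker g') ⧸
        Submodule.comap (LinearMap.ker g').subtype B') ≃ₗ[A]
      (↥(LinearMap.ker g) ⧸ Submodule.comap (LinearMap.ker g).subtype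
        (LinearMap.range p)) ⊗[A] N) := by
  have hcomm' : ∀ x, E2 (g' x) = rTensor N g (E x) := fun x => by
    simpa using LinearMap.congr_fun hcomm x
  have hker : Submodule.map (E : Y' →ₗ[A] Y ⊗[A] N) (LinearMap.ker g') = LinearMap.ker (g.rTensor N) := by
    ext y
    simp only [Submodule.mem_map, LinearMap.mem_ker]
    constructor
    · rintro ⟨x, hx, rfl⟩
      rw [LinearEquiv.coe_coe, ← hcomm', hx, map_zero]
    · intro hy
      refine ⟨E.symm y, ?_, by simp⟩
      apply E2.injective
      rw [map_zero, hcomm']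
      simpa using hy
  let e1 : ↥(LinearMap.ker g') ≃ₗ[A] ↥(LinearMap.ker (g.rTensor N)) :=
    (E.submoduleMap (LinearMap.ker g')).trans (LinearEquiv.ofEq _ _ hker)
  have he1 : ∀ x : ↥(LinearMap.ker g'), ((e1 x : Y ⊗[A] N)) = E (x : Y') := fun x => rfl
  have hmap : Submodule.map (e1 : _ →ₗ[A] _) (Submodule.comap (LinearMap.ker g').subtype B')
      = Submodule.comap (LinearMap.ker (g.rTensor N)).subtype
          (LinearMap.range (p.rTensor N)) := by
    ext s
    simp only [Submodule.mem_map, Submodule.mem_comap, Submodule.coe_subtype]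
    constructor
    · rintro ⟨x, hx, rfl⟩
      rw [LinearEquiv.coe_coe, he1, ← hB']
      exact Submodule.mem_map_of_mem hx
    · intro hs
      rw [← hB'] at hs
      obtain ⟨b, hb, hbs⟩ := hs
      have hbker : b ∈ LinearMap.ker g' := by
        have hsk : (s : Y ⊗[A] N) ∈ Submodule.map (E : Y' →ₗ[A] Y ⊗[A] N) (LinearMap.ker g') := by
          rw [hker]; exact s.2
        obtain ⟨y, hy, hys⟩ := hsk
        have hby : b = y := E.injective (by rw [← LinearEquiv.coe_coe, hbs, hys])
        exact hby ▸ hy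
      refine ⟨⟨b, hbker⟩, hb, ?_⟩
      apply Subtype.coe_injective
      show ((e1 ⟨b, hbker⟩ : ↥(LinearMap.ker (g.rTensor N))) : Y ⊗[A] N) = (s : Y ⊗[A] N)
      rw [he1]
      exact hbs
  obtain ⟨e3⟩ := flatHomologyAux A P Y Y2 N p g hpg
  exact ⟨(Submodule.Quotient.equiv _ _ e1 hmap).trans e3⟩

end MyAux

set_option linter.unusedSectionVars false

noncomputable section MyCobar
open TensorProduct LinearMap

variable (A : Type) [CommRing A] (Γ : Type) [AddCommGroup Γ] [Module A Γ] [Coalgebra A Γ]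
variable (L M N : Type) [AddCommGroup L] [Module A L]
  [AddCommGroup M] [Module A M] [AddCommGroup N] [Module A N]

/-- The shuffle isomorphism between cobar comodule parts. -/
def cobarIso : ∀ n, ((CobarD A Γ (M ⊗[A] N) n : Type) ≃ₗ[A]
    ((CobarD A Γ M n : Type) ⊗[A] N))
  | 0 => LinearEquiv.refl A (M ⊗[A] N)
  | (n+1) => (LinearEquiv.lTensor Γ (cobarIso n)).trans
      (TensorProduct.assoc A Γ (CobarD A Γ M n) N).symm

lemma cobarIso_succ (n : ℕ) : (cobarIso A Γ M N (n+1)).toLinearMap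
    = (TensorProduct.assoc A Γ (CobarD A Γ M n) N).symm.toLinearMap ∘ₗ
      lTensor Γ (cobarIso A Γ M N n).toLinearMap := rfl

variable {M}

lemma cobarIso_comm (ψM : M →ₗ[A] Γ ⊗[A] M) : ∀ n,
    (cobarIso A Γ M N (n+1)).toLinearMap ∘ₗ
      cobarDiffM A Γ ((TensorProduct.assoc A Γ M N).toLinearMap ∘ₗ rTensor N ψM) n
    = rTensor N (cobarDiffM A Γ ψM n) ∘ₗ (cobarIso A Γ M N n).toLinearMap
  | 0 => by
    rw [show cobarDiffM A Γ ((TensorProduct.assoc A Γ M N).toLinearMap ∘ₗ rTensor N ψM) 0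
        = (TensorProduct.assoc A Γ M N).toLinearMap ∘ₗ rTensor N ψM from rfl,
      show cobarDiffM A Γ ψM 0 = ψM from rfl,
      cobarIso_succ A Γ M N 0]
    apply TensorProduct.ext'
    intro m n
    show (TensorProduct.assoc A Γ M N).symm
        ((lTensor Γ (cobarIso A Γ M N 0).toLinearMap)
          ((TensorProduct.assoc A Γ M N) (ψM m ⊗ₜ n)))
      = ψM m ⊗ₜ n
    generalize ψM m = u
    induction u using TensorProduct.induction_on with
    | zero => simp
    | tmul g m' => rfl
    | add u v hu hv => simp only [add_tmul, map_add, hu, hv]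
  | (n+1) => by
    have IH := cobarIso_comm ψM n
    have unf : ∀ (M' : Type) (_ : AddCommGroup M') (_ : Module A M')
        (ψ : M' →ₗ[A] Γ ⊗[A] M'),
        cobarDiffM A Γ ψ (n+1) =
          (@HSub.hSub _ _ _ (@instHSub ((CobarD A Γ M' (n + 1) : Type) →ₗ[A] (CobarD A Γ M' (n + 2) : Type)) _)
            ((TensorProduct.assoc A Γ Γ (CobarD A Γ M' n)).toLinearMap ∘ₗ
            LinearMap.rTensor (CobarD A Γ M' n) (Coalgebra.comul (R := A) (A := Γ)))
            (LinearMap.lTensor Γ (cobarDiffM A Γ ψ n))) :=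
      fun M' _ _ ψ => rfl
    rw [unf M _ _ ψM, unf (M ⊗[A] N) _ _
      ((TensorProduct.assoc A Γ M N).toLinearMap ∘ₗ rTensor N ψM)]
    rw [LinearMap.comp_sub, LinearMap.rTensor_sub, LinearMap.sub_comp]
    congr 1
    · -- coface part, via jugL4
      rw [cobarIso_succ A Γ M N (n+1), cobarIso_succ A Γ M N n]
      have := jugL4 (Coalgebra.comul (R := A) (A := Γ))
        (cobarIso A Γ M N n).toLinearMap
      simpa only [LinearMap.comp_assoc] using this
    · -- inner part, via IH and jugL1
      rw [cobarIso_succ A Γ M N (n+1), LinearMap.comp_assoc, ← LinearMap.lTensor_comp,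
        IH, LinearMap.lTensor_comp, ← LinearMap.comp_assoc, jugL1,
        LinearMap.comp_assoc, ← cobarIso_succ A Γ M N n]

variable (M) in
/-- The shuffle isomorphism on the full cobar complex. -/
def bigE (n : ℕ) : ((L ⊗[A] (CobarD A Γ (M ⊗[A] N) n) : Type)) ≃ₗ[A]
    ((L ⊗[A] (CobarD A Γ M n) : Type) ⊗[A] N) :=
  (LinearEquiv.lTensor L (cobarIso A Γ M N n)).trans
    (TensorProduct.assoc A L (CobarD A Γ M n) N).symm

lemma bigE_toLinearMap (n : ℕ) : (bigE A Γ L M N n).toLinearMap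
    = (TensorProduct.assoc A L (CobarD A Γ M n) N).symm.toLinearMap ∘ₗ
      lTensor L (cobarIso A Γ M N n).toLinearMap := rfl

lemma bigE_comm (ψL : L →ₗ[A] L ⊗[A] Γ) (ψM : M →ₗ[A] Γ ⊗[A] M) (n : ℕ) :
    (bigE A Γ L M N (n+1)).toLinearMap ∘ₗ
      cobarDiff A Γ L ψL ((TensorProduct.assoc A Γ M N).toLinearMap ∘ₗ rTensor N ψM) n
    = rTensor N (cobarDiff A Γ L ψL ψM n) ∘ₗ (bigE A Γ L M N n).toLinearMap := by
  have unf : ∀ (M' : Type) (_ : AddCommGroup M') (_ : Module A M')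
      (ψ : M' →ₗ[A] Γ ⊗[A] M'),
      cobarDiff A Γ L ψL ψ n =
        (@HSub.hSub _ _ _ (@instHSub ((L ⊗[A] (CobarD A Γ M' n) : Type) →ₗ[A]
              (L ⊗[A] (CobarD A Γ M' (n + 1)) : Type)) _)
          ((TensorProduct.assoc A L Γ (CobarD A Γ M' n)).toLinearMap ∘ₗ
            LinearMap.rTensor (CobarD A Γ M' n) ψL)
          (LinearMap.lTensor L (cobarDiffM A Γ ψ n))) :=
    fun M' _ _ ψ => rfl
  rw [unf M _ _ ψM, unf (M ⊗[A] N) _ _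
    ((TensorProduct.assoc A Γ M N).toLinearMap ∘ₗ rTensor N ψM)]
  rw [LinearMap.comp_sub, LinearMap.rTensor_sub, LinearMap.sub_comp]
  congr 1
  · rw [bigE_toLinearMap A Γ L N (n+1), cobarIso_succ A Γ M N n,
      bigE_toLinearMap A Γ L N n]
    have := jugL4 ψL (cobarIso A Γ M N n).toLinearMap
    simpa only [LinearMap.comp_assoc] using this
  · rw [bigE_toLinearMap A Γ L N (n+1), LinearMap.comp_assoc, ← LinearMap.lTensor_comp,
      cobarIso_comm A Γ N ψM n, LinearMap.lTensor_comp, ← LinearMap.comp_assoc, jugL1,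
      LinearMap.comp_assoc, ← bigE_toLinearMap A Γ L N n]

lemma dM_sq (ψM : M →ₗ[A] Γ ⊗[A] M)
    (hM : IsLeftCoaction A Γ ψM) : ∀ n,
    cobarDiffM A Γ ψM (n+1) ∘ₗ cobarDiffM A Γ ψM n = 0
  | 0 => by
    have unf : cobarDiffM A Γ ψM 1 =
        (@HSub.hSub _ _ _ (@instHSub ((CobarD A Γ M 1 : Type) →ₗ[A] (CobarD A Γ M 2 : Type)) _)
          ((TensorProduct.assoc A Γ Γ (CobarD A Γ M 0)).toLinearMap ∘ₗ
          LinearMap.rTensor (CobarD A Γ M 0) (Coalgebra.comul (R := A) (A := Γ)))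
          (LinearMap.lTensor Γ (cobarDiffM A Γ ψM 0))) := rfl
    rw [unf, LinearMap.sub_comp, sub_eq_zero]
    exact hM.1
  | (n+1) => by
    have IH := dM_sq ψM hM n
    have unf : ∀ (k : ℕ),
        cobarDiffM A Γ ψM (k+1) =
          (@HSub.hSub _ _ _ (@instHSub ((CobarD A Γ M (k + 1) : Type) →ₗ[A] (CobarD A Γ M (k + 2) : Type)) _)
            ((TensorProduct.assoc A Γ Γ (CobarD A Γ M k)).toLinearMap ∘ₗ
            LinearMap.rTensor (CobarD A Γ M k) (Coalgebra.comul (R := A) (A := Γ)))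
            (LinearMap.lTensor Γ (cobarDiffM A Γ ψM k))) :=
      fun k => rfl
    rw [unf (n+1), unf n]
    set d := cobarDiffM A Γ ψM n with hd
    set F1 := (TensorProduct.assoc A Γ Γ (CobarD A Γ M (n+1))).toLinearMap ∘ₗ
      LinearMap.rTensor (CobarD A Γ M (n+1)) (Coalgebra.comul (R := A) (A := Γ)) with hF1
    set F0 := (TensorProduct.assoc A Γ Γ (CobarD A Γ M n)).toLinearMap ∘ₗ
      LinearMap.rTensor (CobarD A Γ M n) (Coalgebra.comul (R := A) (A := Γ)) with hF0
    have ha : F1 ∘ₗ F0 = LinearMap.lTensor (N := (CobarD A Γ M (n+1) : Type)) (P := (CobarD A Γ M (n+2) : Type)) Γ F0 ∘ₗ F0 := by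
      have := jugL3 (X := (CobarD A Γ M n : Type))
        (Coalgebra.comul (R := A) (A := Γ)) (Coalgebra.comul (R := A) (A := Γ))
        Coalgebra.coassoc
      rw [hF1, hF0]
      simpa only [LinearMap.comp_assoc] using this
    have hb : F1 ∘ₗ lTensor Γ d = LinearMap.lTensor (N := (CobarD A Γ M (n+1) : Type)) (P := (CobarD A Γ M (n+2) : Type)) Γ (lTensor Γ d) ∘ₗ F0 := by
      have := jugL2 (Coalgebra.comul (R := A) (A := Γ)) d
      rw [hF1, hF0]
      simpa only [LinearMap.comp_assoc] using this
    have hcomb : LinearMap.lTensor (N := (CobarD A Γ M (n+1) : Type)) (P := (CobarD A Γ M (n+2) : Type)) Γ F0 ∘ₗ lTensor Γ d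
        - LinearMap.lTensor (N := (CobarD A Γ M (n+1) : Type)) (P := (CobarD A Γ M (n+2) : Type)) Γ (lTensor Γ d) ∘ₗ lTensor Γ d = 0 := by
      rw [← LinearMap.lTensor_comp, ← LinearMap.lTensor_comp, ← LinearMap.lTensor_sub,
        ← LinearMap.sub_comp, ← unf n, hd, IH, LinearMap.lTensor_zero]
    rw [LinearMap.lTensor_sub, LinearMap.sub_comp, LinearMap.comp_sub, LinearMap.comp_sub,
      LinearMap.sub_comp, LinearMap.sub_comp, ha, hb, hcomb, sub_zero, sub_self]

lemma D_sq (ψL : L →ₗ[A] L ⊗[A] Γ) (ψM : M →ₗ[A] Γ ⊗[A] M)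
    (hL : IsRightCoaction A Γ ψL) (hM : IsLeftCoaction A Γ ψM) (n : ℕ) :
    cobarDiff A Γ L ψL ψM (n+1) ∘ₗ cobarDiff A Γ L ψL ψM n = 0 := by
  have unf : ∀ (k : ℕ),
      cobarDiff A Γ L ψL ψM k =
        (@HSub.hSub _ _ _ (@instHSub ((L ⊗[A] (CobarD A Γ M k) : Type) →ₗ[A]
              (L ⊗[A] (CobarD A Γ M (k + 1)) : Type)) _)
          ((TensorProduct.assoc A L Γ (CobarD A Γ M k)).toLinearMap ∘ₗ
            LinearMap.rTensor (CobarD A Γ M k) ψL)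
          (LinearMap.lTensor L (cobarDiffM A Γ ψM k))) :=
    fun k => rfl
  rw [unf (n+1), unf n]
  set d := cobarDiffM A Γ ψM n with hd
  have unfM : cobarDiffM A Γ ψM (n+1) =
      (@HSub.hSub _ _ _ (@instHSub ((CobarD A Γ M (n + 1) : Type) →ₗ[A]
          (CobarD A Γ M (n + 2) : Type)) _)
        ((TensorProduct.assoc A Γ Γ (CobarD A Γ M n)).toLinearMap ∘ₗ
        LinearMap.rTensor (CobarD A Γ M n) (Coalgebra.comul (R := A) (A := Γ)))
        (LinearMap.lTensor Γ d)) := rfl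
  rw [unfM]
  set c := (TensorProduct.assoc A Γ Γ (CobarD A Γ M n)).toLinearMap ∘ₗ
    LinearMap.rTensor (CobarD A Γ M n) (Coalgebra.comul (R := A) (A := Γ)) with hc
  set aL1 := (TensorProduct.assoc A L Γ (CobarD A Γ M (n+1))).toLinearMap ∘ₗ
    LinearMap.rTensor (CobarD A Γ M (n+1)) ψL with haL1
  set aL0 := (TensorProduct.assoc A L Γ (CobarD A Γ M n)).toLinearMap ∘ₗ
    LinearMap.rTensor (CobarD A Γ M n) ψL with haL0
  have ha : aL1 ∘ₗ aL0 = LinearMap.lTensor (N := (CobarD A Γ M (n+1) : Type)) (P := (CobarD A Γ M (n+2) : Type)) L c ∘ₗ aL0 := by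
    have := jugL3 (X := (CobarD A Γ M n : Type)) ψL
      (Coalgebra.comul (R := A) (A := Γ)) hL.1
    rw [haL1, haL0, hc]
    simpa only [LinearMap.comp_assoc] using this
  have hb : aL1 ∘ₗ lTensor L d = LinearMap.lTensor (N := (CobarD A Γ M (n+1) : Type)) (P := (CobarD A Γ M (n+2) : Type)) L (lTensor Γ d) ∘ₗ aL0 := by
    have := jugL2 ψL d
    rw [haL1, haL0]
    simpa only [LinearMap.comp_assoc] using this
  have hcomb : LinearMap.lTensor (N := (CobarD A Γ M (n+1) : Type)) (P := (CobarD A Γ M (n+2) : Type)) L c ∘ₗ lTensor L d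
      - LinearMap.lTensor (N := (CobarD A Γ M (n+1) : Type)) (P := (CobarD A Γ M (n+2) : Type)) L (lTensor Γ d) ∘ₗ lTensor L d = 0 := by
    rw [← LinearMap.lTensor_comp, ← LinearMap.lTensor_comp, ← LinearMap.lTensor_sub,
      ← LinearMap.sub_comp, ← unfM, hd, dM_sq A Γ ψM hM n, LinearMap.lTensor_zero]
  rw [LinearMap.lTensor_sub, LinearMap.sub_comp, LinearMap.comp_sub, LinearMap.comp_sub,
    LinearMap.sub_comp, LinearMap.sub_comp, ha, hb, hcomb, sub_zero, sub_self]

end MyCobar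

/-- for a trivial flat coefficient comodule `N`,
`Cotor^n_Γ(L, M ⊗ N) ≅ Cotor^n_Γ(L, M) ⊗ N` for all `n ≥ 0` (in particular, for `n = 0`,
`L □_Γ (M ⊗ N) ≅ (L □_Γ M) ⊗ N`). Here `M ⊗ N` carries the coaction `ψM ⊗ id`, i.e. the
coaction induced by `ψM` with `N` a trivial comodule. -/
theorem cotor_trivial_coefficients
    (A : Type) [CommRing A] (Γ : Type) [AddCommGroup Γ] [Module A Γ] [Coalgebra A Γ]
    (L : Type) [AddCommGroup L] [Module A L] (ψL : L →ₗ[A] L ⊗[A] Γ)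
    (M : Type) [AddCommGroup M] [Module A M] (ψM : M →ₗ[A] Γ ⊗[A] M)
    (N : Type) [AddCommGroup N] [Module A N] [Module.Flat A N]
    (hL : IsRightCoaction A Γ ψL) (hM : IsLeftCoaction A Γ ψM)
    (n : ℕ) :
    Nonempty
      ((Cotor A Γ L ψL
          ((TensorProduct.assoc A Γ M N).toLinearMap ∘ₗ LinearMap.rTensor N ψM) n) ≃ₗ[A]
        ((Cotor A Γ L ψL ψM n) ⊗[A] N)) := by
  classical
  cases n with
  | zero =>
    have hpg : LinearMap.range (0 : (L ⊗[A] (CobarD A Γ M 0 : Type)) →ₗ[A]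
          (L ⊗[A] (CobarD A Γ M 0 : Type)))
        ≤ LinearMap.ker (cobarDiff A Γ L ψL ψM 0) := by
      rw [LinearMap.range_zero]
      exact bot_le
    have hB' : Submodule.map (bigE A Γ L M N 0).toLinearMap (⊥ : Submodule A
          (L ⊗[A] (CobarD A Γ (M ⊗[A] N) 0 : Type)))
        = LinearMap.range (LinearMap.rTensor N (0 : (L ⊗[A] (CobarD A Γ M 0 : Type)) →ₗ[A]
          (L ⊗[A] (CobarD A Γ M 0 : Type)))) := by
      rw [Submodule.map_bot, LinearMap.rTensor_zero, LinearMap.range_zero]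
    obtain ⟨e⟩ := transportHomology (cobarDiff A Γ L ψL ψM 0)
      (cobarDiff A Γ L ψL
        ((TensorProduct.assoc A Γ M N).toLinearMap ∘ₗ LinearMap.rTensor N ψM) 0)
      (bigE A Γ L M N 0) (bigE A Γ L M N 1)
      (bigE_comm A Γ L N ψL ψM 0)
      (0 : (L ⊗[A] (CobarD A Γ M 0 : Type)) →ₗ[A] (L ⊗[A] (CobarD A Γ M 0 : Type)))
      ⊥ hB' hpg
    have hq : Submodule.comap (LinearMap.ker (cobarDiff A Γ L ψL ψM 0)).subtype
        (LinearMap.range (0 : (L ⊗[A] (CobarD A Γ M 0 : Type)) →ₗ[A]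
          (L ⊗[A] (CobarD A Γ M 0 : Type))))
        = Submodule.comap (LinearMap.ker (cobarDiff A Γ L ψL ψM 0)).subtype
          (⊥ : Submodule A (L ⊗[A] (CobarD A Γ M 0 : Type))) := by
      rw [LinearMap.range_zero]
    exact ⟨e.trans (TensorProduct.congr
      (Submodule.quotEquivOfEq _ _ hq) (LinearEquiv.refl A N))⟩
  | succ k =>
    have hpg : LinearMap.range (cobarDiff A Γ L ψL ψM k)
        ≤ LinearMap.ker (cobarDiff A Γ L ψL ψM (k+1)) := by
      rw [LinearMap.range_le_ker_iff]
      exact D_sq A Γ L ψL ψM hL hM k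
    have hB' : Submodule.map (bigE A Γ L M N (k+1)).toLinearMap
        (LinearMap.range (cobarDiff A Γ L ψL
          ((TensorProduct.assoc A Γ M N).toLinearMap ∘ₗ LinearMap.rTensor N ψM) k))
        = LinearMap.range (LinearMap.rTensor N (cobarDiff A Γ L ψL ψM k)) := by
      have hcomm' : ∀ x, bigE A Γ L M N (k+1) (cobarDiff A Γ L ψL
            ((TensorProduct.assoc A Γ M N).toLinearMap ∘ₗ LinearMap.rTensor N ψM) k x)
          = LinearMap.rTensor N (cobarDiff A Γ L ψL ψM k) (bigE A Γ L M N k x) :=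
        fun x => by simpa using LinearMap.congr_fun (bigE_comm A Γ L N ψL ψM k) x
      ext y
      simp only [Submodule.mem_map, LinearMap.mem_range]
      constructor
      · rintro ⟨w, ⟨x, rfl⟩, rfl⟩
        exact ⟨bigE A Γ L M N k x, (hcomm' x).symm⟩
      · rintro ⟨z, rfl⟩
        refine ⟨cobarDiff A Γ L ψL
          ((TensorProduct.assoc A Γ M N).toLinearMap ∘ₗ LinearMap.rTensor N ψM) k
            ((bigE A Γ L M N k).symm z), ⟨_, rfl⟩, ?_⟩
        rw [LinearEquiv.coe_coe, hcomm']
        simp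
    exact transportHomology (cobarDiff A Γ L ψL ψM (k+1))
      (cobarDiff A Γ L ψL
        ((TensorProduct.assoc A Γ M N).toLinearMap ∘ₗ LinearMap.rTensor N ψM) (k+1))
      (bigE A Γ L M N (k+1)) (bigE A Γ L M N (k+2))
      (bigE_comm A Γ L N ψL ψM (k+1))
      (cobarDiff A Γ L ψL ψM k) _ hB' hpg
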